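/- Let G be the dihedral group of order 2n (n ≥ 3), H its cyclic subgroup of rotations of order n, V the 1-dimensional representation of H over a field F containing a primitive n-th root of unity (with char F not dividing 2n) on which a generator of H acts by a primitive n-th root of unity, and W = Ind_H^G V the corresponding 2-dimensional irreducible G-module. Then β(G, W) = n = β(H, V). -/

import Mathlib

noncomputable section
open MvPolynomial

variable {F : Type} [Field F]

/-- The algebra homomorphism between polynomial algebras (viewed as symmetric algebras)
induced by a linear map between the spaces of variables (the degree one components). -/
noncomputable def algOf {α β : Type} [Fintype α] [Fintype β] [DecidableEq α]
    (f : (α → F) →ₗ[F] (β → F)) :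
    MvPolynomial α F →ₐ[F] MvPolynomial β F :=
  aeval fun j => ∑ i, f (Pi.single j 1) i • X i

/-- The embedding of the space of linear forms into the polynomial algebra. -/
noncomputable def lin {β : Type} [Fintype β] (w : β → F) : MvPolynomial β F :=
  ∑ i, w i • X i

/-- The subalgebra of `G`-invariants of the symmetric algebra of a representation. -/
def invariants {G : Type} [Group G] {α : Type} [Fintype α] [DecidableEq α]
    (ρ : Representation F G (α → F)) : Subalgebra F (MvPolynomial α F) where
  carrier := {p | ∀ g : G, algOf (ρ g) p = p}
  mul_mem' := fun ha hb g => by rw [map_mul, ha g, hb g]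
  add_mem' := fun ha hb g => by rw [map_add, ha g, hb g]
  algebraMap_mem' := fun r g => (algOf (ρ g)).commutes r

variable {G : Type} [Group G] {α : Type} [Fintype α] [DecidableEq α]

/-- The invariant ring is generated as an `F`-algebra in degrees at most `d`. -/
def genLE (ρ : Representation F G (α → F)) (d : ℕ) : Prop :=
  Algebra.adjoin F {p : MvPolynomial α F | p ∈ invariants ρ ∧ p.totalDegree ≤ d}
    = invariants ρ

/-- The Noether number `β(G,W)` of a representation. -/
def noether (ρ : Representation F G (α → F)) : ℕ := sInf {d | genLE ρ d}

/-- The Hilbert ideal: the ideal of `S(W)` generated by the invariants of positive degree. -/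
def hilbertIdeal (ρ : Representation F G (α → F)) : Ideal (MvPolynomial α F) :=
  Ideal.span {p | p ∈ invariants ρ ∧ constantCoeff p = 0}

/-- `b(G,W)`: the top degree of the algebra of coinvariants `S(W)/S(W)₊^G S(W)`. -/
def coinvTop (ρ : Representation F G (α → F)) : ℕ :=
  sSup {d | ∃ p : MvPolynomial α F, p.IsHomogeneous d ∧ p ∉ hilbertIdeal ρ}

/-- `b_k(G,W)`: the top degree of `S(W)/((S(W)₊^G)^k S(W))`. -/
def coinvTopK (ρ : Representation F G (α → F)) (k : ℕ) : ℕ :=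
  sSup {d | ∃ p : MvPolynomial α F, p.IsHomogeneous d ∧ p ∉ (hilbertIdeal ρ) ^ k}

/-- The span of all products of `k` positive-degree invariants,
i.e. `(S(W)₊^G)^k` computed inside the invariant ring. -/
def prodPow (ρ : Representation F G (α → F)) (k : ℕ) : Submodule F (MvPolynomial α F) :=
  Submodule.span F {x | ∃ f : Fin k → MvPolynomial α F,
    (∀ i, f i ∈ invariants ρ ∧ constantCoeff (f i) = 0) ∧ x = ∏ i, f i}

/-- The `k`-th Noether number `β_k(G,W)`, the top degree of `S(W)^G/(S(W)₊^G)^{k+1}`. -/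
def noetherK (ρ : Representation F G (α → F)) (k : ℕ) : ℕ :=
  sSup {d | ∃ p, p ∈ invariants ρ ∧ p.IsHomogeneous d ∧ p ∉ prodPow ρ (k+1)}

/-- `β(G)`: the supremum of the Noether numbers over all finite dimensional modules. -/
def noetherSup (F G : Type) [Field F] [Group G] : ℕ∞ :=
  ⨆ (n : ℕ) (ρ : Representation F G (Fin n → F)), (noether ρ : ℕ∞)

/-- `b(G)`: the supremum of `b(G,W)` over all finite dimensional modules. -/
def coinvSup (F G : Type) [Field F] [Group G] : ℕ∞ :=
  ⨆ (n : ℕ) (ρ : Representation F G (Fin n → F)), (coinvTop ρ : ℕ∞)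

/-- `β_k(G)`: the supremum of the `k`-th Noether numbers over all modules. -/
def noetherKSup (F G : Type) [Field F] [Group G] (k : ℕ) : ℕ∞ :=
  ⨆ (n : ℕ) (ρ : Representation F G (Fin n → F)), (noetherK ρ k : ℕ∞)


/-!
The rotation `r` acts diagonally, multiplying the variable `xᵢ` by `ζ ^ wᵢ`, with `w = (1)` on
`V` and `w = (1, -1)` on `W` in the basis `e, s e` (`e` spans the image of `V`, and `s e` is a
`ζ⁻¹`-eigenvector of `r`). So every monomial `x^m` of an invariant has weight `⟨w, m⟩` divisible
by `n`. Since `|⟨w, m⟩| ≤ deg x^m`, invariants of degree `< n` have weight `0`; these generate only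
weight-`0` polynomials, which miss the invariant `x^n`, resp. `x^n + y^n`. Hence `β ≥ n`.
Conversely the invariants of `V` are spanned by the powers of `x^n`, and those of `W` by the
symmetrisations `x^a y^b + x^b y^a` with `a ≡ b mod n`; these equal `(xy)^a (x^(nk) + y^(nk))`, and
`x^(nk) + y^(nk)` lies in the algebra generated by `xy` and `x^n + y^n` by Newton's recursion.
-/

section LinearSubstitution

variable {ι κ : Type} [Fintype ι] [Fintype κ]

theorem lin_single [DecidableEq ι] (j : ι) : lin (Pi.single j (1 : F)) = X j := by
  simp [lin, Pi.single_apply]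

theorem isHomogeneous_lin (v : ι → F) : (lin v).IsHomogeneous 1 :=
  IsHomogeneous.sum _ _ _ fun i _ => by
    simpa only [smul_eq_C_mul] using (isHomogeneous_X F i).C_mul (v i)

variable [DecidableEq ι]

theorem algOf_X (f : (ι → F) →ₗ[F] (κ → F)) (j : ι) :
    algOf f (X j) = lin (f (Pi.single j 1)) :=
  aeval_X _ _

theorem algOf_lin (f : (ι → F) →ₗ[F] (κ → F)) (v : ι → F) :
    algOf f (lin v) = lin (f v) := by
  conv_rhs => rw [← Finset.univ_sum_single v]
  have hsingle (i : ι) : Pi.single i (v i) = v i • Pi.single i (1 : F) := by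
    rw [← Pi.single_smul, smul_eq_mul, mul_one]
  simp only [lin, map_sum, map_smul, algOf_X, Finset.sum_apply, Finset.smul_sum, hsingle,
    Pi.smul_apply, Finset.sum_smul, smul_assoc]
  exact Finset.sum_comm

theorem algOf_id : algOf (LinearMap.id : (ι → F) →ₗ[F] (ι → F)) = AlgHom.id F _ :=
  algHom_ext fun j => by rw [algOf_X, LinearMap.id_apply, lin_single, AlgHom.id_apply]

theorem algOf_comp {μ : Type} [Fintype μ] [DecidableEq κ]
    (f : (κ → F) →ₗ[F] (μ → F)) (g : (ι → F) →ₗ[F] (κ → F)) :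
    algOf (f ∘ₗ g) = (algOf f).comp (algOf g) :=
  algHom_ext fun j => by rw [AlgHom.comp_apply, algOf_X, algOf_X, algOf_lin, LinearMap.comp_apply]

theorem totalDegree_algOf_le (f : (ι → F) →ₗ[F] (κ → F)) (p : MvPolynomial ι F) :
    (algOf f p).totalDegree ≤ p.totalDegree := by
  conv_lhs => rw [← sum_homogeneousComponent p]
  rw [map_sum]
  refine (totalDegree_finsetSum _ _).trans (Finset.sup_le fun k hk => ?_)
  have := (homogeneousComponent_isHomogeneous k p).aeval _
    fun j => isHomogeneous_lin (f (Pi.single j 1))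
  rw [one_mul] at this
  exact this.totalDegree_le.trans (Nat.lt_succ_iff.1 (Finset.mem_range.1 hk))

end LinearSubstitution

section Invariants

variable {ι κ : Type} [Fintype ι] [DecidableEq ι] [Fintype κ] [DecidableEq κ]

theorem algOf_one (ρ : Representation F G (ι → F)) : algOf (ρ 1) = AlgHom.id F _ := by
  rw [map_one, Module.End.one_eq_id, algOf_id]

theorem algOf_mul (ρ : Representation F G (ι → F)) (g h : G) :
    algOf (ρ (g * h)) = (algOf (ρ g)).comp (algOf (ρ h)) := by
  rw [map_mul, Module.End.mul_eq_comp, algOf_comp]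

def polyStabilizer (ρ : Representation F G (ι → F)) (p : MvPolynomial ι F) : Subgroup G where
  carrier := {g | algOf (ρ g) p = p}
  one_mem' := by rw [Set.mem_ofPred_eq, algOf_one, AlgHom.id_apply]
  mul_mem' {g h} hg hh := by rw [Set.mem_ofPred_eq, algOf_mul, AlgHom.comp_apply, hh, hg]
  inv_mem' {g} (hg : algOf (ρ g) p = p) := by
    change algOf (ρ g⁻¹) p = p
    conv_lhs => rw [← hg, ← AlgHom.comp_apply, ← algOf_mul, inv_mul_cancel, algOf_one]
    rfl

theorem mem_invariants_of_closure_eq_top (ρ : Representation F G (ι → F)) {S : Set G}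
    (hS : Subgroup.closure S = ⊤) {p : MvPolynomial ι F} (h : ∀ g ∈ S, algOf (ρ g) p = p) :
    p ∈ invariants ρ := fun g =>
  ((Subgroup.closure_le (polyStabilizer ρ p)).2 h) (hS ▸ Subgroup.mem_top g)

def algEquivOf (T : (ι → F) ≃ₗ[F] (κ → F)) : MvPolynomial ι F ≃ₐ[F] MvPolynomial κ F :=
  AlgEquiv.ofAlgHom (algOf T) (algOf T.symm.toLinearMap)
    (by rw [← algOf_comp, T.comp_symm, algOf_id])
    (by rw [← algOf_comp, T.symm_comp, algOf_id])

theorem totalDegree_algEquivOf (T : (ι → F) ≃ₗ[F] (κ → F)) (p : MvPolynomial ι F) :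
    (algEquivOf T p).totalDegree = p.totalDegree := by
  refine le_antisymm (totalDegree_algOf_le _ _) ?_
  have := totalDegree_algOf_le T.symm.toLinearMap (algEquivOf T p)
  rwa [show algOf T.symm.toLinearMap (algEquivOf T p) = p from
    (algEquivOf T).symm_apply_apply p] at this

theorem algEquivOf_mem_invariants_iff {ρ : Representation F G (ι → F)}
    {σ : Representation F G (κ → F)} (φ : ρ.Equiv σ) (p : MvPolynomial ι F) :
    algEquivOf φ.toLinearEquiv p ∈ invariants σ ↔ p ∈ invariants ρ := by
  have key (g : G) : algOf (σ g) (algEquivOf φ.toLinearEquiv p)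
      = algEquivOf φ.toLinearEquiv (algOf (ρ g) p) := by
    change ((algOf (σ g)).comp (algOf φ.toLinearEquiv.toLinearMap)) p
      = ((algOf φ.toLinearEquiv.toLinearMap).comp (algOf (ρ g))) p
    rw [← algOf_comp, ← algOf_comp, Representation.Equiv.toLinearEquiv_toLinearMap,
      φ.isIntertwining']
  exact forall_congr' fun g => by rw [key, (algEquivOf _).injective.eq_iff]

theorem genLE_iff_of_equiv {ρ : Representation F G (ι → F)} {σ : Representation F G (κ → F)}
    (φ : ρ.Equiv σ) (d : ℕ) : genLE σ d ↔ genLE ρ d := by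
  set Φ := algEquivOf φ.toLinearEquiv
  have hinv : (invariants ρ).map (Φ : MvPolynomial ι F →ₐ[F] MvPolynomial κ F) = invariants σ := by
    ext q
    refine ⟨?_, fun hq => ⟨Φ.symm q, ?_, Φ.apply_symm_apply q⟩⟩
    · rintro ⟨p, hp, rfl⟩
      exact (algEquivOf_mem_invariants_iff φ p).2 hp
    · change Φ.symm q ∈ invariants ρ
      rwa [← algEquivOf_mem_invariants_iff φ, Φ.apply_symm_apply]
  have hgen : (Φ : MvPolynomial ι F →ₐ[F] MvPolynomial κ F) ''
      {p | p ∈ invariants ρ ∧ p.totalDegree ≤ d} = {q | q ∈ invariants σ ∧ q.totalDegree ≤ d} := by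
    ext q
    refine ⟨?_, fun ⟨hq, hd⟩ => ⟨Φ.symm q, ⟨?_, ?_⟩, Φ.apply_symm_apply q⟩⟩
    · rintro ⟨p, ⟨hp, hd⟩, rfl⟩
      exact ⟨(algEquivOf_mem_invariants_iff φ p).2 hp, (totalDegree_algEquivOf _ p).trans_le hd⟩
    · rwa [← algEquivOf_mem_invariants_iff φ, Φ.apply_symm_apply]
    · rwa [← totalDegree_algEquivOf φ.toLinearEquiv, Φ.apply_symm_apply]
  rw [genLE, genLE, ← hgen, ← hinv, ← AlgHom.map_adjoin]
  exact (Subalgebra.map_injective Φ.injective).eq_iff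

theorem noether_eq_of_equiv {ρ : Representation F G (ι → F)} {σ : Representation F G (κ → F)}
    (φ : ρ.Equiv σ) : noether σ = noether ρ := by
  simp only [noether, genLE_iff_of_equiv φ]

end Invariants

section DiagonalAction

variable {ι : Type}

theorem algOf_eq_aeval_smul_X [Fintype ι] [DecidableEq ι] (f : (ι → F) →ₗ[F] (ι → F))
    (c : ι → F) (hf : ∀ j, f (Pi.single j 1) = c j • Pi.single j 1) :
    algOf f = aeval fun j => c j • X j :=
  algHom_ext fun j => by
    rw [algOf_X, hf, aeval_X]
    simp [lin, Pi.single_apply]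

theorem algOf_eq_rename [Fintype ι] [DecidableEq ι] (f : (ι → F) →ₗ[F] (ι → F))
    (π : Equiv.Perm ι) (hf : ∀ j, f (Pi.single j 1) = Pi.single (π j) 1) : algOf f = rename π :=
  algHom_ext fun j => by rw [algOf_X, hf, lin_single, rename_X]

theorem coeff_aeval_smul_X (c : ι → F) (p : MvPolynomial ι F) (m : ι →₀ ℕ) :
    coeff m (aeval (fun j => c j • X j) p) = (m.prod fun i k => c i ^ k) * coeff m p := by
  classical
  induction p using MvPolynomial.induction_on' with
  | monomial m' a =>
    have : aeval (fun j => c j • X j) (monomial m' a)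
        = monomial m' ((m'.prod fun i k => c i ^ k) * a) := by
      rw [aeval_monomial, monomial_eq, C_mul, algebraMap_eq]
      simp only [Finsupp.prod, smul_eq_C_mul, mul_pow, Finset.prod_mul_distrib, ← map_pow,
        ← map_prod]
      ring
    rw [this, coeff_monomial, coeff_monomial]
    split_ifs with h
    · rw [h]
    · rw [mul_zero]
  | add p q hp hq => rw [map_add, coeff_add, coeff_add, hp, hq, mul_add]

theorem prod_zpow_eq_zpow_sum {ζ : F} (hζ : ζ ≠ 0) (s : Finset ι) (k : ι → ℤ) :
    ∏ i ∈ s, ζ ^ k i = ζ ^ ∑ i ∈ s, k i := by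
  induction s using Finset.cons_induction with
  | empty => simp
  | cons a s ha ih => rw [Finset.prod_cons, Finset.sum_cons, ih, zpow_add₀ hζ]

theorem dvd_weight_of_aeval_eq_self {ζ : F} {n : ℕ} (hζ : IsPrimitiveRoot ζ n) (hn : n ≠ 0)
    (w : ι → ℤ) {p : MvPolynomial ι F} (hp : aeval (fun i => ζ ^ w i • X i) p = p)
    {m : ι →₀ ℕ} (hm : m ∈ p.support) : (n : ℤ) ∣ Finsupp.weight w m := by
  have h := congrArg (coeff m) hp
  have hprod : (m.prod fun i k => (ζ ^ w i) ^ k) = ζ ^ Finsupp.weight w m := by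
    simp only [Finsupp.prod, Finsupp.weight_apply, Finsupp.sum, ← zpow_natCast, ← zpow_mul,
      nsmul_eq_mul, mul_comm (w _)]
    exact prod_zpow_eq_zpow_sum (hζ.ne_zero hn) _ _
  rw [coeff_aeval_smul_X, hprod] at h
  exact (hζ.zpow_eq_one_iff_dvd _).1
    (mul_right_cancel₀ (mem_support_iff.1 hm) (h.trans (one_mul _).symm))

theorem abs_weight_le_degree [Fintype ι] {w : ι → ℤ} (hw : ∀ i, |w i| ≤ 1) (m : ι →₀ ℕ) :
    |Finsupp.weight w m| ≤ m.degree := by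
  rw [Finsupp.weight_eq_sum, Finsupp.degree_eq_sum, Nat.cast_sum]
  refine (Finset.abs_sum_le_sum_abs _ _).trans (Finset.sum_le_sum fun i _ => ?_)
  rw [nsmul_eq_mul, abs_mul, Nat.abs_cast]
  exact mul_le_of_le_one_right (Nat.cast_nonneg _) (hw i)

end DiagonalAction

section RotationWeights

variable {ι : Type} [Fintype ι] [DecidableEq ι] {ζ : F} {n : ℕ}

theorem genLE_of_invariants_le (ρ : Representation F G (ι → F)) (d : ℕ)
    (h : invariants ρ ≤ Algebra.adjoin F {p | p ∈ invariants ρ ∧ p.totalDegree ≤ d}) :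
    genLE ρ d :=
  le_antisymm (Algebra.adjoin_le fun _ hp => hp.1) h

theorem isWeightedHomogeneous_zero_of_mem_adjoin (hζ : IsPrimitiveRoot ζ n) (hn : n ≠ 0)
    {w : ι → ℤ} (hw : ∀ i, |w i| ≤ 1) (ρ : Representation F G (ι → F)) (g₀ : G)
    (hg₀ : algOf (ρ g₀) = aeval fun i => ζ ^ w i • X i) {d : ℕ} (hd : d < n)
    {p : MvPolynomial ι F}
    (hp : p ∈ Algebra.adjoin F {q | q ∈ invariants ρ ∧ q.totalDegree ≤ d}) :
    IsWeightedHomogeneous w p 0 := by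
  induction hp using Algebra.adjoin_induction with
  | mem q hq =>
    intro m hm
    have hdvd := dvd_weight_of_aeval_eq_self hζ hn w (hg₀ ▸ hq.1 g₀) (mem_support_iff.2 hm)
    have hdeg : (m.degree : ℤ) < n := by
      exact_mod_cast ((le_totalDegree (mem_support_iff.2 hm)).trans hq.2).trans_lt hd
    exact Int.eq_zero_of_abs_lt_dvd hdvd ((abs_weight_le_degree hw m).trans_lt hdeg)
  | algebraMap r => exact isWeightedHomogeneous_C w r
  | add p q _ _ hp hq => exact hp.add hq
  | mul p q _ _ hp hq => simpa using hp.mul hq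

theorem noether_eq_of_isWeightedHomogeneous (hζ : IsPrimitiveRoot ζ n) (hn : n ≠ 0)
    {w : ι → ℤ} (hw : ∀ i, |w i| ≤ 1) (ρ : Representation F G (ι → F)) (g₀ : G)
    (hg₀ : algOf (ρ g₀) = aeval fun i => ζ ^ w i • X i) (hgen : genLE ρ n)
    {q : MvPolynomial ι F} (hq : q ∈ invariants ρ) (hq₀ : ¬IsWeightedHomogeneous w q 0) :
    noether ρ = n := by
  refine le_antisymm (Nat.sInf_le hgen) (le_csInf ⟨n, hgen⟩ fun d (hd : genLE ρ d) => ?_)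
  by_contra! hlt
  exact hq₀ (isWeightedHomogeneous_zero_of_mem_adjoin hζ hn hw ρ g₀ hg₀ hlt (hd.ge hq))

end RotationWeights

section Cyclic

variable {ζ : F} {n : ℕ}

theorem Subgroup.zpowers_mk_eq_top (g : G) :
    Subgroup.zpowers (⟨g, Subgroup.mem_zpowers g⟩ : Subgroup.zpowers g) = ⊤ := by
  refine eq_top_iff.2 fun ⟨x, k, hk⟩ _ => ⟨k, Subtype.ext ?_⟩
  simpa using hk

theorem monomial_fin_one (m : Fin 1 →₀ ℕ) (c : F) : monomial m c = c • X 0 ^ m 0 := by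
  rw [monomial_eq, Finsupp.prod_fintype _ _ (fun _ => pow_zero _), Fin.prod_univ_one,
    smul_eq_C_mul]

theorem noether_eq_of_scalar_generator (hζ : IsPrimitiveRoot ζ n) (hn : n ≠ 0)
    (ρ : Representation F G (Fin 1 → F)) (g₀ : G) (hg₀ : Subgroup.zpowers g₀ = ⊤)
    (hρ : ρ g₀ = ζ • LinearMap.id) : noether ρ = n := by
  have hA : algOf (ρ g₀) = aeval fun i => ζ ^ (1 : Fin 1 → ℤ) i • X i := by
    rw [algOf_eq_aeval_smul_X _ (fun _ => ζ) fun j => by rw [hρ]; rfl]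
    simp
  have hXn : (X 0 ^ n : MvPolynomial (Fin 1) F) ∈ invariants ρ :=
    mem_invariants_of_closure_eq_top ρ (S := {g₀}) (by rw [← Subgroup.zpowers_eq_closure, hg₀])
      (by simp [hA, smul_pow, hζ.pow_eq_one])
  have hweight (m : Fin 1 →₀ ℕ) : Finsupp.weight 1 m = (m 0 : ℤ) := by
    simp [Finsupp.weight_eq_sum]
  refine noether_eq_of_isWeightedHomogeneous hζ hn (by simp) ρ g₀ hA ?_ hXn fun h => hn ?_
  · refine genLE_of_invariants_le ρ n fun p hp => ?_
    rw [p.as_sum]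
    refine Subalgebra.sum_mem _ fun m hm => ?_
    have hdvd := dvd_weight_of_aeval_eq_self hζ hn 1 (hA ▸ hp g₀) hm
    rw [hweight, Int.natCast_dvd_natCast] at hdvd
    obtain ⟨k, hk⟩ := hdvd
    rw [monomial_fin_one, hk, pow_mul]
    have hgen : (X 0 ^ n : MvPolynomial (Fin 1) F) ∈ {q | q ∈ invariants ρ ∧ q.totalDegree ≤ n} :=
      ⟨hXn, (totalDegree_X_pow _ _).le⟩
    exact Subalgebra.smul_mem _ (Subalgebra.pow_mem _ (Algebra.subset_adjoin hgen) _) _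
  · have := h (d := Finsupp.single 0 n) (by simp [coeff_X_pow])
    simpa [hweight] using this

end Cyclic

section PowerSums

variable {S A : Type*} [CommRing S] [SetLike A S] [SubringClass A S] (s : A) {x y : S} {n : ℕ}

theorem pow_mul_add_pow_mul_mem (hxy : x * y ∈ s) (hn : x ^ n + y ^ n ∈ s) (k : ℕ) :
    x ^ (n * k) + y ^ (n * k) ∈ s := by
  induction k using Nat.twoStepInduction with
  | zero => simpa using add_mem (one_mem s) (one_mem s)
  | one => simpa using hn
  | more k h₀ h₁ =>
    have : x ^ (n * (k + 2)) + y ^ (n * (k + 2))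
        = (x ^ n + y ^ n) * (x ^ (n * (k + 1)) + y ^ (n * (k + 1)))
          - (x * y) ^ n * (x ^ (n * k) + y ^ (n * k)) := by ring
    rw [this]
    exact sub_mem (mul_mem hn h₁) (mul_mem (pow_mem hxy n) h₀)

theorem pow_mul_pow_add_pow_mul_pow_mem (hxy : x * y ∈ s) (hn : x ^ n + y ^ n ∈ s) {a b : ℕ}
    (hab : a ≡ b [MOD n]) : x ^ a * y ^ b + x ^ b * y ^ a ∈ s := by
  wlog h : a ≤ b generalizing a b
  · rw [add_comm]
    exact this hab.symm (le_of_not_ge h)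
  obtain ⟨k, hk⟩ := (Nat.modEq_iff_dvd' h).1 hab
  obtain rfl : b = a + n * k := by omega
  have : x ^ a * y ^ (a + n * k) + x ^ (a + n * k) * y ^ a
      = (x * y) ^ a * (x ^ (n * k) + y ^ (n * k)) := by ring
  rw [this]
  exact mul_mem (pow_mem hxy a) (pow_mul_add_pow_mul_mem s hxy hn k)

end PowerSums

section Dihedral

open DihedralGroup

variable {ζ : F} {n : ℕ}

theorem DihedralGroup.closure_r_one_sr_zero :
    Subgroup.closure {r 1, sr 0} = (⊤ : Subgroup (DihedralGroup n)) := by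
  have hr (k : ZMod n) : r k ∈ Subgroup.closure {r 1, sr 0} := by
    rw [← ZMod.intCast_zmod_cast k, ← r_one_zpow]
    exact zpow_mem (Subgroup.subset_closure (by simp)) _
  refine eq_top_iff.2 fun g _ => ?_
  cases g with
  | r k => exact hr k
  | sr k =>
    rw [← zero_add k, ← sr_mul_r]
    exact mul_mem (Subgroup.subset_closure (by simp)) (hr k)

theorem add_rename_swap_eq_sum (p : MvPolynomial (Fin 2) F) :
    p + rename (Equiv.swap 0 1) p
      = ∑ m ∈ p.support, coeff m p • (X 0 ^ m 0 * X 1 ^ m 1 + X 0 ^ m 1 * X 1 ^ m 0) := by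
  conv_lhs => rw [p.as_sum]
  rw [map_sum, ← Finset.sum_add_distrib]
  refine Finset.sum_congr rfl fun m _ => ?_
  simp only [monomial_fin_two, map_mul, map_pow, rename_C, rename_X, Equiv.swap_apply_left,
    Equiv.swap_apply_right, smul_eq_C_mul]
  ring

theorem mem_of_rename_swap_eq_self (h2 : (2 : F) ≠ 0)
    (A : Subalgebra F (MvPolynomial (Fin 2) F)) (hxy : X 0 * X 1 ∈ A)
    (hn : X 0 ^ n + X 1 ^ n ∈ A) {p : MvPolynomial (Fin 2) F}
    (hsym : rename (Equiv.swap 0 1) p = p) (hmod : ∀ m ∈ p.support, m 0 ≡ m 1 [MOD n]) :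
    p ∈ A := by
  have hhalf : p = (2 : F)⁻¹ • (p + rename (Equiv.swap 0 1) p) := by
    rw [hsym, ← two_smul F p, smul_smul, inv_mul_cancel₀ h2, one_smul]
  rw [hhalf, add_rename_swap_eq_sum]
  exact A.smul_mem (A.sum_mem fun m hm =>
    A.smul_mem (pow_mul_pow_add_pow_mul_pow_mem A hxy hn (hmod m hm)) _) _

theorem noether_eq_of_dihedral_coordinates (hζ : IsPrimitiveRoot ζ n) (hn : 2 ≤ n)
    (h2 : (2 : F) ≠ 0) (τ : Representation F (DihedralGroup n) (Fin 2 → F))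
    (hr : algOf (τ (r 1)) = aeval fun i => ζ ^ ![(1 : ℤ), -1] i • X i)
    (hs : algOf (τ (sr 0)) = rename (Equiv.swap 0 1)) : noether τ = n := by
  have hn₀ : n ≠ 0 := by omega
  have hζ₀ : ζ ≠ 0 := hζ.ne_zero hn₀
  have hinv {p : MvPolynomial (Fin 2) F} (hpr : aeval (fun i => ζ ^ ![(1 : ℤ), -1] i • X i) p = p)
      (hps : rename (Equiv.swap 0 1) p = p) : p ∈ invariants τ := by
    refine mem_invariants_of_closure_eq_top τ closure_r_one_sr_zero ?_
    rintro g (rfl | rfl)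
    · rwa [hr]
    · rwa [hs]
  have hxy : (X 0 * X 1 : MvPolynomial (Fin 2) F) ∈ invariants τ :=
    hinv (by simp [hζ₀]) (by simp [mul_comm])
  have hpn : (X 0 ^ n + X 1 ^ n : MvPolynomial (Fin 2) F) ∈ invariants τ :=
    hinv (by simp [smul_pow, inv_pow, hζ.pow_eq_one]) (by simp [add_comm])
  have hweight (m : Fin 2 →₀ ℕ) : Finsupp.weight ![(1 : ℤ), -1] m = m 0 - m 1 := by
    simp [Finsupp.weight_eq_sum, Fin.sum_univ_two, sub_eq_add_neg]
  refine noether_eq_of_isWeightedHomogeneous hζ hn₀ (by simp [Fin.forall_fin_two]) τ (r 1) hr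
    ?_ hpn fun h => hn₀ ?_
  · refine genLE_of_invariants_le τ n fun p hp => ?_
    set A := Algebra.adjoin F {q : MvPolynomial (Fin 2) F | q ∈ invariants τ ∧ q.totalDegree ≤ n}
    have hxyA : X 0 * X 1 ∈ A := Algebra.subset_adjoin ⟨hxy, (totalDegree_mul _ _).trans
      (by rw [totalDegree_X, totalDegree_X]; omega)⟩
    have hpnA : X 0 ^ n + X 1 ^ n ∈ A := Algebra.subset_adjoin ⟨hpn, (totalDegree_add _ _).trans
      (by rw [totalDegree_X_pow, totalDegree_X_pow, max_self])⟩
    refine mem_of_rename_swap_eq_self h2 A hxyA hpnA (hs ▸ hp (sr 0)) fun m hm => ?_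
    have := dvd_weight_of_aeval_eq_self hζ hn₀ _ (hr ▸ hp (r 1)) hm
    rwa [hweight, dvd_sub_comm, ← Nat.modEq_iff_dvd] at this
  · have := h (d := Finsupp.single 0 n) (by simp [coeff_X_pow, Finsupp.single_eq_single_iff, hn₀])
    simpa [hweight] using this

end Dihedral

section InducedModule

open DihedralGroup

variable {ζ : F} {n : ℕ}

theorem IsPrimitiveRoot.ne_inv (hζ : IsPrimitiveRoot ζ n) (hn : 3 ≤ n) : ζ ≠ ζ⁻¹ := fun h => by
  have hζ₀ : ζ ≠ 0 := hζ.ne_zero (by omega)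
  have := Nat.le_of_dvd two_pos
    ((hζ.pow_eq_one_iff_dvd 2).1 (by rw [sq, ← mul_inv_cancel₀ hζ₀, ← h]))
  omega

theorem sr_zero_apply_mem_eigenspace_inv {V : Type} [AddCommGroup V] [Module F V]
    (σ : Representation F (DihedralGroup n) V) (hζ : ζ ≠ 0) {e : V}
    (he : e ∈ Module.End.eigenspace (σ (r 1)) ζ) :
    σ (sr 0) e ∈ Module.End.eigenspace (σ (r 1)) ζ⁻¹ := by
  rw [Module.End.mem_eigenspace_iff] at he ⊢
  have hinv : σ (r 1)⁻¹ e = ζ⁻¹ • e := by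
    have := congrArg (σ (r 1)⁻¹) he
    rw [σ.inv_self_apply, map_smul] at this
    conv_rhs => rw [this, smul_smul, inv_mul_cancel₀ hζ, one_smul]
  have : (r 1 : DihedralGroup n) * sr 0 = sr 0 * (r 1)⁻¹ := by simp [r_mul_sr, sr_mul_r, inv_r]
  rw [← Module.End.mul_apply, ← map_mul, this, map_mul, Module.End.mul_apply, hinv, map_smul]

theorem noether_eq_of_dihedral_basis (hζ : IsPrimitiveRoot ζ n) (hn : 2 ≤ n) (h2 : (2 : F) ≠ 0)
    (σ : Representation F (DihedralGroup n) (Fin 2 → F)) (b : Module.Basis (Fin 2) F (Fin 2 → F))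
    (hr : ∀ i, σ (r 1) (b i) = ζ ^ ![(1 : ℤ), -1] i • b i)
    (hs : ∀ i, σ (sr 0) (b i) = b (Equiv.swap 0 1 i)) : noether σ = n := by
  let τ : Representation F (DihedralGroup n) (Fin 2 → F) :=
    (b.equivFun.conjRingEquiv : Module.End F _ ≃+* Module.End F _).toMonoidHom.comp σ
  have hb (i : Fin 2) : b.equivFun (b i) = Pi.single i 1 := by
    ext j
    simp [Pi.single_apply, eq_comm]
  have hτ (g : DihedralGroup n) (i : Fin 2) : τ g (Pi.single i 1) = b.equivFun (σ g (b i)) := by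
    change b.equivFun (σ g (b.equivFun.symm (Pi.single i 1))) = _
    rw [← hb i, LinearEquiv.symm_apply_apply]
  rw [← noether_eq_of_equiv (.mk b.equivFun fun g => by ext v; simp [τ] : σ.Equiv τ)]
  exact noether_eq_of_dihedral_coordinates hζ hn h2 τ
    (algOf_eq_aeval_smul_X _ _ fun i => by rw [hτ, hr, map_smul, hb])
    (algOf_eq_rename _ _ fun i => by rw [hτ, hs, hb])

theorem noether_eq_of_eigenvector (hζ : IsPrimitiveRoot ζ n) (hn : 3 ≤ n) (h2 : (2 : F) ≠ 0)
    (σ : Representation F (DihedralGroup n) (Fin 2 → F)) {e : Fin 2 → F} (he₀ : e ≠ 0)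
    (he : e ∈ Module.End.eigenspace (σ (r 1)) ζ) : noether σ = n := by
  have hζ₀ : ζ ≠ 0 := hζ.ne_zero (by omega)
  set f := σ (sr 0) e
  have hf : f ∈ Module.End.eigenspace (σ (r 1)) ζ⁻¹ := sr_zero_apply_mem_eigenspace_inv σ hζ₀ he
  have hsf : σ (sr 0) f = e := by
    rw [← Module.End.mul_apply, ← map_mul, sr_mul_self, map_one, Module.End.one_apply]
  have hf₀ : f ≠ 0 := fun h => he₀ (by rw [← hsf, h, map_zero])
  have hli : LinearIndependent F ![e, f] := by
    refine Module.End.eigenvectors_linearIndependent' (σ (r 1)) ![ζ, ζ⁻¹] ?_ _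
      (Fin.forall_fin_two.2 ⟨⟨he, he₀⟩, ⟨hf, hf₀⟩⟩)
    intro i j h
    have hne := hζ.ne_inv hn
    fin_cases i <;> fin_cases j <;> simp at h ⊢ <;> first | exact hne h | exact hne h.symm
  let b := basisOfLinearIndependentOfCardEqFinrank hli (by simp)
  have hb₀ : b 0 = e := by simp [b]
  have hb₁ : b 1 = f := by simp [b]
  rw [Module.End.mem_eigenspace_iff] at he hf
  refine noether_eq_of_dihedral_basis hζ (by omega) h2 σ b (Fin.forall_fin_two.2 ⟨?_, ?_⟩)
    (Fin.forall_fin_two.2 ⟨?_, ?_⟩)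
  · simpa [hb₀] using he
  · simpa [hb₁] using hf
  · simp [hb₀, hb₁, f]
  · simpa [hb₀, hb₁] using hsf

end InducedModule

theorem stmt7_general {n : ℕ} (hn : 3 ≤ n) (ζ : F) (hζ : IsPrimitiveRoot ζ n)
    (hchar : ((2 * n : ℕ) : F) ≠ 0)
    (ρ : Representation F (Subgroup.zpowers (DihedralGroup.r 1 : DihedralGroup n))
      (Fin 1 → F))
    (hρ : ρ ⟨DihedralGroup.r 1, Subgroup.mem_zpowers _⟩ = ζ • LinearMap.id)
    (σ : Representation F (DihedralGroup n) (Fin 2 → F))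
    (ι : (Fin 1 → F) →ₗ[F] (Fin 2 → F)) (hι : Function.Injective ι)
    (hequiv : ∀ h : Subgroup.zpowers (DihedralGroup.r 1 : DihedralGroup n),
      σ h ∘ₗ ι = ι ∘ₗ ρ h) :
    noether σ = n ∧ noether ρ = n := by
  have h2 : (2 : F) ≠ 0 := left_ne_zero_of_mul (a := (2 : F)) (b := n) (by exact_mod_cast hchar)
  have hre : ι (Pi.single 0 1) ∈ Module.End.eigenspace (σ (DihedralGroup.r 1)) ζ := by
    rw [Module.End.mem_eigenspace_iff]
    simpa [hρ] using LinearMap.congr_fun (hequiv ⟨DihedralGroup.r 1, Subgroup.mem_zpowers _⟩)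
      (Pi.single 0 1)
  have he : ι (Pi.single 0 1) ≠ 0 := (map_ne_zero_iff ι hι).2 (by simp)
  exact ⟨noether_eq_of_eigenvector hζ hn h2 σ he hre,
    noether_eq_of_scalar_generator hζ (by omega) ρ _ (Subgroup.zpowers_mk_eq_top _) hρ⟩

/-- for the dihedral group `G` of order `2n`, its rotation subgroup `H`,
the one-dimensional `H`-module `V` given by a primitive `n`-th root of unity `ζ`, and
the induced two-dimensional `G`-module `W`, one has `β(G,W) = n = β(H,V)`. -/
theorem stmt7 {n : ℕ} (hn : 3 ≤ n) (ζ : F) (hζ : IsPrimitiveRoot ζ n)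
    (hchar : ((2 * n : ℕ) : F) ≠ 0)
    (ρ : Representation F (Subgroup.zpowers (DihedralGroup.r 1 : DihedralGroup n))
      (Fin 1 → F))
    (hρ : ρ ⟨DihedralGroup.r 1, Subgroup.mem_zpowers _⟩ = ζ • LinearMap.id)
    (σ : Representation F (DihedralGroup n) (Fin 2 → F))
    (ι : (Fin 1 → F) →ₗ[F] (Fin 2 → F)) (hι : Function.Injective ι)
    (hequiv : ∀ h : Subgroup.zpowers (DihedralGroup.r 1 : DihedralGroup n),
      σ h ∘ₗ ι = ι ∘ₗ ρ h)
    (C : Set (DihedralGroup n))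
    (hC : Subgroup.IsComplement C
      ((Subgroup.zpowers (DihedralGroup.r 1 : DihedralGroup n) : Subgroup (DihedralGroup n)) : Set (DihedralGroup n)))
    (h1 : (1 : DihedralGroup n) ∈ C)
    (hindep : iSupIndep fun c : C => (LinearMap.range ι).map (σ c.1))
    (hspan : ⨆ c : C, (LinearMap.range ι).map (σ c.1) = ⊤) :
    noether σ = n ∧ noether ρ = n :=
  stmt7_general hn ζ hζ hchar ρ hρ σ ι hι hequiv

end
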